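/- Let μ be a Borel probability measure on a metric space (X,d) satisfying μ(A_r) ≥ 1 - α(r) for all Borel A with μ(A) ≥ 1/2 and all r ≥ 0. Then for every measurable f : X → ℝ ∪ {+∞} bounded from below with μ(f = +∞) < 1/2, μ(Q_t f > m(f) + r) ≤ α(√(rt)) for all r, t > 0. -/

import Mathlib

/-!
On `A = {f ≤ m(f)}` we have `f ≤ m(f)`, so `Q_t f(x) ≤ m(f) + d(x, A)² / t`; hence
`Q_t f(x) > m(f) + r` forces `d(x, A) > √(rt)`. By right-continuity of `m ↦ μ(f ≤ m)` the
infimum defining `m(f)` is attained, i.e. `μ(A) ≥ 1/2` (the defining set is nonempty because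
`μ(f < ∞) > 1/2`), so concentration at radius `√(rt)` bounds the measure of that event by
`α(√(rt))`.
-/

open MeasureTheory Set

/-- The median `m(f) = inf {m ∈ ℝ : μ(f ≤ m) ≥ 1/2}` of an extended-real-valued
function. -/
noncomputable def med {X : Type*} [MeasurableSpace X] (μ : Measure X) (f : X → EReal) : ℝ :=
  sInf {m : ℝ | (1 : ENNReal) / 2 ≤ μ {x | f x ≤ (m : EReal)}}

/-- The inf-convolution `Q_t f (x) = inf_y (f y + d(x,y)²/t)` for `f : X → ℝ ∪ {+∞}`
encoded with values in `EReal`. -/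
noncomputable def infConvE {X : Type*} [MetricSpace X] (t : ℝ) (f : X → EReal) (x : X) :
    EReal :=
  ⨅ y : X, f y + ((dist x y ^ 2 / t : ℝ) : EReal)

section Median

variable {X : Type*} [MeasurableSpace X] {μ : Measure X} {f : X → EReal}

theorem exists_half_le_measure_le [IsProbabilityMeasure μ] (hf : Measurable f)
    (htop : μ {x | f x = ⊤} < 1 / 2) : ∃ m : ℝ, 1 / 2 ≤ μ {x | f x ≤ m} := by
  have hunion : ⋃ m : ℝ, {x | f x ≤ m} = {x | f x = ⊤}ᶜ := by
    ext x
    simp only [mem_iUnion, mem_ofPred_eq, mem_compl_iff, ← lt_top_iff_ne_top]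
    exact ⟨fun ⟨m, hm⟩ ↦ hm.trans_lt (EReal.coe_lt_top m),
      fun hx ↦ (EReal.lt_iff_exists_real_btwn.1 hx).imp fun _ h ↦ h.1.le⟩
  have hhalf : 1 / 2 < μ (⋃ m : ℝ, {x | f x ≤ m}) := by
    have htop_meas : MeasurableSet {x | f x = ⊤} := hf (measurableSet_singleton ⊤)
    rw [hunion, prob_compl_eq_one_sub htop_meas, lt_tsub_iff_right]
    calc 1 / 2 + μ {x | f x = ⊤} < 1 / 2 + 1 / 2 := ENNReal.add_lt_add_left (by norm_num) htop
      _ = 1 := ENNReal.add_halves 1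
  have hmono : Monotone fun m : ℝ ↦ {x | f x ≤ m} :=
    fun a b hab x hx ↦ hx.trans (EReal.coe_le_coe_iff.2 hab)
  obtain ⟨m, hm⟩ := ((tendsto_measure_iUnion_atTop hmono).eventually (lt_mem_nhds hhalf)).exists
  exact ⟨m, hm.le⟩

theorem half_le_measure_le_med [IsFiniteMeasure μ] (hf : Measurable f)
    (hne : ∃ m : ℝ, 1 / 2 ≤ μ {x | f x ≤ m}) : 1 / 2 ≤ μ {x | f x ≤ med μ f} := by
  have hlim := tendsto_measure_biInter_gt (μ := μ) (s := fun m : ℝ ↦ {x | f x ≤ m})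
    (a := med μ f) (fun m _ ↦ (hf measurableSet_Iic).nullMeasurableSet)
    (fun i j _ hij x hx ↦ hx.trans (EReal.coe_le_coe_iff.2 hij))
    ⟨med μ f + 1, by linarith, measure_ne_top μ _⟩
  have hinter : ⋂ m > med μ f, {x | f x ≤ m} = {x | f x ≤ med μ f} := by
    ext x
    simp only [mem_iInter, mem_ofPred_eq]
    refine ⟨fun h ↦ EReal.le_of_forall_lt_iff_le.1 fun z hz ↦
      h z (EReal.coe_lt_coe_iff.1 hz),
      fun h m hm ↦ h.trans (EReal.coe_le_coe_iff.2 hm.le)⟩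
  rw [hinter] at hlim
  refine ge_of_tendsto hlim (eventually_nhdsWithin_of_forall fun m hm ↦ ?_)
  obtain ⟨b, hbS, hbm⟩ := exists_lt_of_csInf_lt (hne.imp fun _ h ↦ h) hm
  exact le_trans (b := μ {x | f x ≤ b}) hbS
    (measure_mono fun x hx ↦ hx.trans (EReal.coe_le_coe_iff.2 hbm.le))

end Median

theorem infConvE_le_add_infDist_sq {X : Type*} [MetricSpace X] {t : ℝ} (ht : 0 ≤ t)
    {f : X → EReal} {A : Set X} (hA : A.Nonempty) {a : ℝ} (hfA : ∀ y ∈ A, f y ≤ a)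
    (x : X) :
    infConvE t f x ≤ ((a + Metric.infDist x A ^ 2 / t : ℝ) : EReal) := by
  have hbound : ∀ d ∈ Ioi (Metric.infDist x A),
      infConvE t f x ≤ ((a + d ^ 2 / t : ℝ) : EReal) := by
    intro d hd
    obtain ⟨y, hyA, hy⟩ := (Metric.infDist_lt_iff hA).1 hd
    calc infConvE t f x ≤ f y + ((dist x y ^ 2 / t : ℝ) : EReal) := iInf_le _ y
      _ ≤ (a : EReal) + ((d ^ 2 / t : ℝ) : EReal) := by
        gcongr
        exact hfA y hyA
      _ = ((a + d ^ 2 / t : ℝ) : EReal) := (EReal.coe_add _ _).symm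
  have hcont : Continuous fun d : ℝ ↦ ((a + d ^ 2 / t : ℝ) : EReal) :=
    continuous_coe_real_ereal.comp (by fun_prop)
  exact ge_of_tendsto (hcont.tendsto _ |>.mono_left nhdsWithin_le_nhds)
    (eventually_nhdsWithin_of_forall hbound)

theorem infConv_deviation_of_concentration_general {X : Type*} [MetricSpace X] [MeasurableSpace X]
    [OpensMeasurableSpace X] (μ : Measure X) [IsProbabilityMeasure μ]
    (α : ℝ → ℝ)
    (H : ∀ A : Set X, MeasurableSet A → 1 / 2 ≤ μ A → ∀ r : ℝ, 0 ≤ r →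
      1 - ENNReal.ofReal (α r) ≤ μ {x | Metric.infDist x A ≤ r}) :
    ∀ f : X → EReal, Measurable f → (∃ c : ℝ, ∀ x, (c : EReal) ≤ f x) →
      μ {x | f x = ⊤} < 1 / 2 →
      ∀ r t : ℝ, 0 < r → 0 < t →
        μ {x | ((med μ f + r : ℝ) : EReal) < infConvE t f x} ≤
          ENNReal.ofReal (α (Real.sqrt (r * t))) := by
  intro f hf _ htop r t hr ht
  set A := {x | f x ≤ med μ f}
  have hA : 1 / 2 ≤ μ A := half_le_measure_le_med hf (exists_half_le_measure_le hf htop)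
  have hAne : A.Nonempty := nonempty_of_measure_ne_zero (ne_bot_of_le_ne_bot (by norm_num) hA)
  set B := {x | Metric.infDist x A ≤ √(r * t)}
  have hsub : {x | ((med μ f + r : ℝ) : EReal) < infConvE t f x} ⊆ Bᶜ := by
    intro x hx hxB
    have hsq : Metric.infDist x A ^ 2 ≤ r * t :=
      (Real.le_sqrt Metric.infDist_nonneg (by positivity)).1 hxB
    refine hx.not_ge ((infConvE_le_add_infDist_sq ht.le hAne (fun _ hy ↦ hy) x).trans ?_)
    exact EReal.coe_le_coe_iff.2 (by gcongr; rwa [div_le_iff₀ ht])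
  have hB : MeasurableSet B :=
    (isClosed_le (Metric.continuous_infDist_pt A) continuous_const).measurableSet
  calc μ {x | ((med μ f + r : ℝ) : EReal) < infConvE t f x} ≤ μ Bᶜ := measure_mono hsub
    _ = 1 - μ B := prob_compl_eq_one_sub hB
    _ ≤ ENNReal.ofReal (α √(r * t)) :=
      tsub_le_iff_tsub_le.1 (H A (hf measurableSet_Iic) hA _ (Real.sqrt_nonneg _))

/-- if `μ` satisfies the concentration inequality `μ(A_r) ≥ 1 - α(r)`
for all Borel `A` with `μ(A) ≥ 1/2` and all `r ≥ 0`, then for every measurable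
`f : X → ℝ ∪ {+∞}` bounded from below with `μ(f = +∞) < 1/2`,
`μ(Q_t f > m(f) + r) ≤ α(√(rt))` for all `r, t > 0`. -/
theorem infConv_deviation_of_concentration {X : Type*} [MetricSpace X] [MeasurableSpace X]
    [OpensMeasurableSpace X] (μ : Measure X) [IsProbabilityMeasure μ]
    (α : ℝ → ℝ) (hα : AntitoneOn α (Ici 0))
    (H : ∀ A : Set X, MeasurableSet A → 1 / 2 ≤ μ A → ∀ r : ℝ, 0 ≤ r →
      1 - ENNReal.ofReal (α r) ≤ μ {x | Metric.infDist x A ≤ r}) :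
    ∀ f : X → EReal, Measurable f → (∃ c : ℝ, ∀ x, (c : EReal) ≤ f x) →
      μ {x | f x = ⊤} < 1 / 2 →
      ∀ r t : ℝ, 0 < r → 0 < t →
        μ {x | ((med μ f + r : ℝ) : EReal) < infConvE t f x} ≤
          ENNReal.ofReal (α (Real.sqrt (r * t))) :=
  infConv_deviation_of_concentration_general μ α H
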